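/- For every n ≥ 1, the counts satisfy, as real numbers, c_{n+1} = δ_n·L_n + (2 − 2·δ_n)·c_n, where δ_n = o_n/m_n; i.e., the vector (L_n, c_n) evolves by the time-varying linear system with matrix M_n = [[3, −2], [δ_n, 2 − 2δ_n]]. -/

import Mathlib

/-- Generation operator: expand a run-length vector `R` starting with symbol `s`,
alternating between `s` and `4 - s` from run to run. -/
def G : List ℕ → ℕ → List ℕ
  | [], _ => []
  | r :: rs, s => List.replicate r s ++ G rs (4 - s)

/-- Pillar sequences: `P 1 = [3]`, `P (n+1) = G (P n) 3` for `n ≥ 1`. -/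
def P : ℕ → List ℕ
  | 0 => []
  | 1 => [3]
  | n + 2 => G (P (n + 1)) 3

/-- Block sequences: `B 1 = G [1,3,3,3,1] 1`, `B (n+1) = B n ++ P n ++ B n` for `n ≥ 1`. -/
def B : ℕ → List ℕ
  | 0 => []
  | 1 => G [1, 3, 3, 3, 1] 1
  | n + 2 => B (n + 1) ++ P (n + 1) ++ B (n + 1)

/-! The key invariant is `L n = 2 c n + m n`: `B n` has `m n` more `3`s than `1`s. It propagates
because `m (n+1) = ∑ P n = 3 m n - 2 o n`, the entries of `P n` being `1` or `3`. Given the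
invariant, `c (n+1) = 2 c n + o n` is the claimed identity once `o n = δ n · m n`, which needs
`m n > 0`. -/

lemma length_G (R : List ℕ) (s : ℕ) : (G R s).length = R.sum := by
  induction R generalizing s with
  | nil => rfl
  | cons r rs ih => simp [G, ih]

lemma eq_or_eq_of_mem_G {R : List ℕ} {s x : ℕ} (hs : s ≤ 4) (hx : x ∈ G R s) :
    x = s ∨ x = 4 - s := by
  induction R generalizing s with
  | nil => simp [G] at hx
  | cons r rs ih =>
    rcases List.mem_append.1 hx with hx | hx
    · exact .inl (List.eq_of_mem_replicate hx)
    · rcases ih (Nat.sub_le 4 s) hx with h | h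
      · exact .inr h
      · exact .inl (by omega)

lemma sum_add_two_mul_count_one {l : List ℕ} (h : ∀ x ∈ l, x = 1 ∨ x = 3) :
    l.sum + 2 * l.count 1 = 3 * l.length := by
  induction l with
  | nil => rfl
  | cons a t ih =>
    have ht := ih fun x hx => h x (List.mem_cons_of_mem a hx)
    rcases h a List.mem_cons_self with rfl | rfl <;> simp <;> omega

lemma P_succ {n : ℕ} (hn : 1 ≤ n) : P (n + 1) = G (P n) 3 := by
  obtain ⟨k, rfl⟩ := Nat.exists_eq_add_of_le' hn
  rfl

lemma B_succ {n : ℕ} (hn : 1 ≤ n) : B (n + 1) = B n ++ P n ++ B n := by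
  obtain ⟨k, rfl⟩ := Nat.exists_eq_add_of_le' hn
  rfl

lemma eq_one_or_eq_three_of_mem_P {n x : ℕ} (hx : x ∈ P n) : x = 1 ∨ x = 3 := by
  match n, hx with
  | 0, hx => simp [P] at hx
  | 1, hx => exact .inr (List.eq_of_mem_singleton hx)
  | k + 2, hx => exact (eq_or_eq_of_mem_G (R := P (k + 1)) (by norm_num) hx).symm

lemma length_P_succ {n : ℕ} (hn : 1 ≤ n) : (P (n + 1)).length = (P n).sum := by
  rw [P_succ hn, length_G]

lemma length_P_pos {n : ℕ} (hn : 1 ≤ n) : 0 < (P n).length := by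
  induction n, hn using Nat.le_induction with
  | base => decide
  | succ n hn ih =>
    rw [length_P_succ hn]
    exact ih.trans_le <| List.length_le_sum_of_one_le _ fun x hx => by
      rcases eq_one_or_eq_three_of_mem_P hx with rfl | rfl <;> norm_num

lemma count_B_succ {n : ℕ} (hn : 1 ≤ n) :
    (B (n + 1)).count 1 = 2 * (B n).count 1 + (P n).count 1 := by
  rw [B_succ hn, List.count_append, List.count_append]
  ring

lemma length_B {n : ℕ} (hn : 1 ≤ n) : (B n).length = 2 * (B n).count 1 + (P n).length := by
  induction n, hn using Nat.le_induction with
  | base => decide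
  | succ n hn ih =>
    have hP := sum_add_two_mul_count_one fun _ => eq_one_or_eq_three_of_mem_P (n := n)
    rw [count_B_succ hn, length_P_succ hn, B_succ hn, List.length_append, List.length_append]
    omega

/-- For every `n ≥ 1`, as real numbers, `c (n+1) = δ n · L n + (2 − 2 δ n) · c n`,
where `δ n = o n / m n`; i.e. `(L n, c n)` evolves under the time-varying matrix
`M n = [[3, −2], [δ n, 2 − 2 δ n]]`. -/
theorem count_linear_system :
    ∀ n : ℕ, 1 ≤ n →
      ((B (n + 1)).count 1 : ℝ) =
        (((P n).count 1 : ℝ) / ((P n).length : ℝ)) * ((B n).length : ℝ) +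
          (2 - 2 * (((P n).count 1 : ℝ) / ((P n).length : ℝ))) * ((B n).count 1 : ℝ) := by
  intro n hn
  have hm : ((P n).length : ℝ) ≠ 0 := by exact_mod_cast (length_P_pos hn).ne'
  have hcount : ((B (n + 1)).count 1 : ℝ) = 2 * (B n).count 1 + (P n).count 1 := by
    exact_mod_cast count_B_succ hn
  have hlength : ((B n).length : ℝ) = 2 * (B n).count 1 + (P n).length := by
    exact_mod_cast length_B hn
  rw [hcount, hlength]
  field_simp
  ring
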